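/- Let G be a diregular (2,k,+2)-digraph with k ≥ 3, and let u, v have unique common out-neighbour u₂ with N⁺(u)={u₁,u₂}, N⁺(v)={v₁,u₂}, u₁≠v₁. Then v ∈ N^{k−1}(u₁) ∪ O(u) and u ∈ N^{k−1}(v₁) ∪ O(v). Moreover, if v ∈ O(u) then u₂ ∈ O(u₁). -/

import Mathlib

open scoped Classical

/-- There is a directed walk of length `n` from `u` to `v` in the digraph with
arc relation `A` (the walk is recorded as its list of `n+1` vertices). -/
def HasWalkLen {V : Type*} (A : V → V → Prop) (n : ℕ) (u v : V) : Prop :=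
  ∃ l : List V, l.head? = some u ∧ l.getLast? = some v ∧ l.Chain' A ∧ l.length = n + 1

/-- The distance from `u` to `v` is at most `n`. -/
def DistLe {V : Type*} (A : V → V → Prop) (n : ℕ) (u v : V) : Prop :=
  ∃ m ≤ n, HasWalkLen A m u v

/-- The distance from `u` to `v` is exactly `n`. -/
def DistEq {V : Type*} (A : V → V → Prop) (n : ℕ) (u v : V) : Prop :=
  HasWalkLen A n u v ∧ ∀ m < n, ¬ HasWalkLen A m u v

/-- A digraph is `k`-geodetic: between any ordered pair of vertices there is at
most one directed path of length at most `k`. -/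
def Geodetic {V : Type*} (A : V → V → Prop) (k : ℕ) : Prop :=
  ∀ u v : V, ∀ l₁ l₂ : List V,
    (l₁.head? = some u ∧ l₁.getLast? = some v ∧ l₁.Chain' A ∧ l₁.length ≤ k + 1) →
    (l₂.head? = some u ∧ l₂.getLast? = some v ∧ l₂.Chain' A ∧ l₂.length ≤ k + 1) →
    l₁ = l₂

/-- Out-neighbourhood. -/
def Nplus {V : Type*} (A : V → V → Prop) (u : V) : Set V := {v | A u v}

/-- Out-degree. -/
noncomputable def outDeg {V : Type*} (A : V → V → Prop) (u : V) : ℕ := {v | A u v}.ncard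

/-- In-degree. -/
noncomputable def inDeg {V : Type*} (A : V → V → Prop) (u : V) : ℕ := {v | A v u}.ncard

/-- `T_k(u)`: the set of vertices at distance at most `k` from `u`. -/
def Tset {V : Type*} (A : V → V → Prop) (k : ℕ) (u : V) : Set V := {v | DistLe A k u v}

/-- `O(u)`: the outliers of `u`, i.e. vertices at distance at least `k+1` from `u`. -/
def Outliers {V : Type*} (A : V → V → Prop) (k : ℕ) (u : V) : Set V := {v | ¬ DistLe A k u v}

/-!
Since `u` and `v` share the out-neighbour `u₂`, a walk `u → ⋯ → v` of length `m ≤ k` has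
`m = k`: otherwise it extends by `v → u₂` to a second path of length at most `k` next to the arc
`u → u₂`. Its first arc cannot be `u → u₂`, which would close a cycle of length `k` through `u₂`,
so it runs through `u₁`, which is then at distance exactly `k - 1` from `v`. Likewise a walk
`u₁ → ⋯ → u₂` of length at most `k` has length `k`, as `u₁` and `u₂` share the in-neighbour `u`;
its last arc comes from `u` or `v`, the only in-neighbours of `u₂`, which yields either a closed
walk of length `k` at `u` or a walk of length `k` from `u` to `v`.
-/

section Walks

variable {V : Type*} {A : V → V → Prop} {n : ℕ} {u v : V}

lemma hasWalkLen_zero_iff : HasWalkLen A 0 u v ↔ u = v := by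
  constructor
  · rintro ⟨l, h₁, h₂, -, hl⟩
    obtain ⟨a, rfl⟩ := List.length_eq_one_iff.mp hl
    simp only [List.head?_cons, List.getLast?_singleton, Option.some.injEq] at h₁ h₂
    rw [← h₁, ← h₂]
  · rintro rfl
    exact ⟨[u], rfl, rfl, List.isChain_singleton u, rfl⟩

lemma hasWalkLen_succ_iff : HasWalkLen A (n + 1) u v ↔ ∃ w, A u w ∧ HasWalkLen A n w v := by
  constructor
  · rintro ⟨_ | ⟨a, _ | ⟨b, t⟩⟩, h₁, h₂, hc, hl⟩
    · simp at hl
    · simp at hl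
    · obtain rfl : a = u := by simpa using h₁
      rw [List.getLast?_cons_cons] at h₂
      obtain ⟨hab, hc⟩ := List.isChain_cons_cons.mp hc
      exact ⟨b, hab, b :: t, rfl, h₂, hc, by simpa using hl⟩
  · rintro ⟨w, huw, _ | ⟨b, t⟩, h₁, h₂, hc, hl⟩
    · simp at hl
    · obtain rfl : b = w := by simpa using h₁
      exact ⟨u :: b :: t, rfl, by rwa [List.getLast?_cons_cons],
        List.isChain_cons_cons.mpr ⟨huw, hc⟩, by simp [hl]⟩

lemma hasWalkLen_succ_iff' : HasWalkLen A (n + 1) u v ↔ ∃ w, HasWalkLen A n u w ∧ A w v := by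
  induction n generalizing u with
  | zero => simp [hasWalkLen_succ_iff, hasWalkLen_zero_iff]
  | succ n ih =>
    rw [hasWalkLen_succ_iff]
    simp only [ih, hasWalkLen_succ_iff]
    aesop

lemma hasWalkLen_one (h : A u v) : HasWalkLen A 1 u v :=
  hasWalkLen_succ_iff.mpr ⟨v, h, hasWalkLen_zero_iff.mpr rfl⟩

lemma HasWalkLen.pos_of_ne (h : HasWalkLen A n u v) (huv : u ≠ v) : 0 < n := by
  rcases n with _ | n
  · exact absurd (hasWalkLen_zero_iff.mp h) huv
  · exact n.succ_pos

end Walks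

namespace Geodetic

variable {V : Type*} {A : V → V → Prop} {k m : ℕ} {u v c : V}

lemma length_eq (hg : Geodetic A k) {m' : ℕ} (hm : m ≤ k) (hm' : m' ≤ k)
    (h : HasWalkLen A m u v) (h' : HasWalkLen A m' u v) : m = m' := by
  obtain ⟨l, h₁, h₂, hc, hl⟩ := h
  obtain ⟨l', h₁', h₂', hc', hl'⟩ := h'
  obtain rfl := hg u v l l' ⟨h₁, h₂, hc, by omega⟩ ⟨h₁', h₂', hc', by omega⟩
  omega

lemma not_hasWalkLen_self (hg : Geodetic A k) (hm₀ : 0 < m) (hm : m ≤ k) :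
    ¬ HasWalkLen A m c c := fun h =>
  hm₀.ne' (hg.length_eq hm k.zero_le h (hasWalkLen_zero_iff.mpr rfl))

lemma length_eq_of_common_outNeighbor (hg : Geodetic A k) (huv : u ≠ v) (huc : A u c)
    (hvc : A v c) (hm : m ≤ k) (h : HasWalkLen A m u v) : m = k := by
  by_contra hne
  have hlong : HasWalkLen A (m + 1) u c := hasWalkLen_succ_iff'.mpr ⟨v, h, hvc⟩
  have hshort : HasWalkLen A 1 u c := hasWalkLen_one huc
  have := hg.length_eq (by omega) (by omega) hlong hshort
  exact (h.pos_of_ne huv).ne' (by omega)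

lemma length_eq_of_common_inNeighbor (hg : Geodetic A k) (huv : u ≠ v) (hcu : A c u)
    (hcv : A c v) (hm : m ≤ k) (h : HasWalkLen A m u v) : m = k := by
  by_contra hne
  have hlong : HasWalkLen A (m + 1) c v := hasWalkLen_succ_iff.mpr ⟨u, hcu, h⟩
  have hshort : HasWalkLen A 1 c v := hasWalkLen_one hcv
  have := hg.length_eq (by omega) (by omega) hlong hshort
  exact (h.pos_of_ne huv).ne' (by omega)

end Geodetic

section

variable {V : Type*} {A : V → V → Prop} {k : ℕ} {u v u₁ c : V}

lemma adj_iff_of_nplus_eq {a b w : V} (h : Nplus A u = {a, b}) : A u w ↔ w = a ∨ w = b := by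
  change w ∈ Nplus A u ↔ _
  rw [h]
  rfl

lemma eq_or_eq_of_inDeg_eq_two {p : V} (hc : inDeg A c = 2) (huv : u ≠ v) (huc : A u c)
    (hvc : A v c) (hpc : A p c) : p = u ∨ p = v := by
  have hfin : {x | A x c}.Finite := Set.finite_of_ncard_ne_zero (by simp [inDeg] at hc; omega)
  have hin : ({u, v} : Set V) = {x | A x c} :=
    Set.eq_of_subset_of_ncard_le (by rintro x (rfl | rfl) <;> assumption)
      (by rw [Set.ncard_pair huv]; exact hc.le) hfin
  exact (hin ▸ hpc : p ∈ ({u, v} : Set V))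

lemma distEq_pred_or_mem_outliers (hg : Geodetic A k) (huv : u ≠ v) (hu : Nplus A u = {u₁, c})
    (hvc : A v c) : DistEq A (k - 1) u₁ v ∨ v ∈ Outliers A k u := by
  refine or_iff_not_imp_right.mpr fun hd => ?_
  obtain ⟨m, hm, hw⟩ := not_not.mp hd
  have huc : A u c := (adj_iff_of_nplus_eq hu).mpr (Or.inr rfl)
  obtain rfl := hg.length_eq_of_common_outNeighbor huv huc hvc hm hw
  obtain ⟨n, rfl⟩ := Nat.exists_eq_add_one_of_ne_zero (hw.pos_of_ne huv).ne'
  obtain ⟨w, huw, hwv⟩ := hasWalkLen_succ_iff.mp hw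
  rw [Nat.add_sub_cancel]
  rcases (adj_iff_of_nplus_eq hu).mp huw with rfl | rfl
  · refine ⟨hwv, fun m hm hwv' => ?_⟩
    have := hg.length_eq_of_common_outNeighbor huv huc hvc (by omega)
      (hasWalkLen_succ_iff.mpr ⟨w, huw, hwv'⟩)
    omega
  · exact absurd (hasWalkLen_succ_iff'.mpr ⟨v, hwv, hvc⟩) (hg.not_hasWalkLen_self n.succ_pos le_rfl)

lemma mem_outliers_of_common_outNeighbor (hg : Geodetic A k) (hc : inDeg A c = 2) (huv : u ≠ v)
    (hu₁c : u₁ ≠ c) (hu : Nplus A u = {u₁, c}) (hvc : A v c) (hv : v ∈ Outliers A k u) :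
    c ∈ Outliers A k u₁ := by
  rintro ⟨m, hm, hw⟩
  have huu₁ : A u u₁ := (adj_iff_of_nplus_eq hu).mpr (Or.inl rfl)
  have huc : A u c := (adj_iff_of_nplus_eq hu).mpr (Or.inr rfl)
  obtain rfl := hg.length_eq_of_common_inNeighbor hu₁c huu₁ huc hm hw
  obtain ⟨n, rfl⟩ := Nat.exists_eq_add_one_of_ne_zero (hw.pos_of_ne hu₁c).ne'
  obtain ⟨p, hu₁p, hpc⟩ := hasWalkLen_succ_iff'.mp hw
  have hup : HasWalkLen A (n + 1) u p := hasWalkLen_succ_iff.mpr ⟨u₁, huu₁, hu₁p⟩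
  rcases eq_or_eq_of_inDeg_eq_two hc huv huc hvc hpc with rfl | rfl
  · exact hg.not_hasWalkLen_self n.succ_pos le_rfl hup
  · exact hv ⟨n + 1, le_rfl, hup⟩

end

theorem stmt_13_general {V : Type*} (A : V → V → Prop) (k : ℕ)
    (hgeo : Geodetic A k)
    (hdeg : ∀ w, outDeg A w = 2 ∧ inDeg A w = 2)
    (u v u₁ u₂ v₁ : V) (huv : u ≠ v)
    (h12 : u₁ ≠ u₂)
    (hu : Nplus A u = {u₁, u₂}) (hv : Nplus A v = {v₁, u₂}) :
    (DistEq A (k - 1) u₁ v ∨ v ∈ Outliers A k u) ∧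
    (DistEq A (k - 1) v₁ u ∨ u ∈ Outliers A k v) ∧
    (v ∈ Outliers A k u → u₂ ∈ Outliers A k u₁) := by
  have huu₂ : A u u₂ := (adj_iff_of_nplus_eq hu).mpr (Or.inr rfl)
  have hvu₂ : A v u₂ := (adj_iff_of_nplus_eq hv).mpr (Or.inr rfl)
  exact ⟨distEq_pred_or_mem_outliers hgeo huv hu hvu₂,
    distEq_pred_or_mem_outliers hgeo huv.symm hv huu₂,
    mem_outliers_of_common_outNeighbor hgeo (hdeg u₂).2 huv h12 hu hvu₂⟩

/-- In a diregular `(2,k,+2)`-digraph with `k ≥ 3` and `u, v` having unique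
common out-neighbour `u₂`: `v ∈ N^{k−1}(u₁) ∪ O(u)`, `u ∈ N^{k−1}(v₁) ∪ O(v)`,
and if `v ∈ O(u)` then `u₂ ∈ O(u₁)`. -/
theorem stmt_13 {V : Type*} [Fintype V] (A : V → V → Prop) (k : ℕ) (hk : 3 ≤ k)
    (hgeo : Geodetic A k)
    (hdeg : ∀ w, outDeg A w = 2 ∧ inDeg A w = 2)
    (hcard : Fintype.card V = 2 ^ (k + 1) + 1)
    (u v u₁ u₂ v₁ : V) (huv : u ≠ v)
    (h12 : u₁ ≠ u₂) (hv2 : v₁ ≠ u₂) (h11 : u₁ ≠ v₁)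
    (hu : Nplus A u = {u₁, u₂}) (hv : Nplus A v = {v₁, u₂}) :
    (DistEq A (k - 1) u₁ v ∨ v ∈ Outliers A k u) ∧
    (DistEq A (k - 1) v₁ u ∨ u ∈ Outliers A k v) ∧
    (v ∈ Outliers A k u → u₂ ∈ Outliers A k u₁) :=
  stmt_13_general A k hgeo hdeg u v u₁ u₂ v₁ huv h12 hu hv
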